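/- arXiv:2208.00814 — 3 statements merged into one kernel-verified Lean document; each statement's English description precedes it below -/
import Mathlib

section
/- If A is an n×n complex matrix that is positive definite (i.e., A + A* is Hermitian positive definite), then for all α > 0 the spectral norm of (αI + A)⁻¹(αI − A) is strictly less than 1. -/
open Matrix
open scoped ComplexOrder
open scoped Matrix.Norms.L2Operator

/-!
For `y ≠ 0`, `‖(αI - A)y‖² = ‖(αI + A)y‖² - 4α·Re⟪y, Ay⟫ < ‖(αI + A)y‖²`, since
`2·Re⟪y, Ay⟫ = ⟪y, (A + Aᴴ)y⟫ > 0`. In particular `αI + A` is invertible, and writing `x = (αI + A)y`,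
the commuting factors give `‖(αI + A)⁻¹(αI - A)x‖ = ‖(αI - A)y‖ < ‖x‖`. The inequality stays
strict for the operator norm because the unit sphere is compact.
-/

open scoped InnerProductSpace

section
variable {𝕜 E F : Type*} [RCLike 𝕜] [NormedAddCommGroup E] [NormedSpace 𝕜 E]
  [FiniteDimensional 𝕜 E] [NormedAddCommGroup F] [NormedSpace 𝕜 F]

theorem ContinuousLinearMap.opNorm_lt_one_of_norm_apply_lt (T : E →L[𝕜] F)
    (h : ∀ x, x ≠ 0 → ‖T x‖ < ‖x‖) : ‖T‖ < 1 := by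
  cases subsingleton_or_nontrivial E
  · simp [Subsingleton.elim T 0]
  have := FiniteDimensional.proper_rclike 𝕜 E
  obtain ⟨x, hx, hTx⟩ : ‖T‖ ∈ (fun x => ‖T x‖) '' Metric.sphere 0 1 := by
    rw [← T.sSup_sphere_eq_norm]
    exact ((isCompact_sphere 0 1).image (by fun_prop)).sSup_mem
      ((Set.nonempty_coe_sort.mp (NormedSpace.sphere_nonempty_rclike 𝕜 zero_le_one)).image _)
  rw [mem_sphere_zero_iff_norm] at hx
  rw [← hTx, ← hx]
  exact h x (norm_ne_zero_iff.mp (by rw [hx]; exact one_ne_zero))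

end

theorem norm_sub_lt_norm_add_of_re_inner_pos {𝕜 E : Type*} [RCLike 𝕜] [NormedAddCommGroup E]
    [InnerProductSpace 𝕜 E] {x y : E} (h : 0 < RCLike.re ⟪x, y⟫_𝕜) : ‖x - y‖ < ‖x + y‖ := by
  have hsq : ‖x - y‖ ^ 2 < ‖x + y‖ ^ 2 := by
    rw [norm_add_sq (𝕜 := 𝕜), norm_sub_sq (𝕜 := 𝕜)]
    linarith
  exact (pow_lt_pow_iff_left₀ (norm_nonneg _) (norm_nonneg _) two_ne_zero).mp hsq

namespace Matrix

variable {𝕜 n : Type*} [RCLike 𝕜] [Fintype n] [DecidableEq n]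

theorem commute_nonsing_inv_left {A B : Matrix n n 𝕜} (h : Commute A B) : Commute A⁻¹ B := by
  by_cases hA : IsUnit A
  · simpa [coe_units_inv] using h.units_inv_left (u := hA.unit)
  · rw [nonsing_inv_apply_not_isUnit A ((isUnit_iff_isUnit_det A).not.mp hA)]
    exact Commute.zero_left B

theorem re_inner_toEuclideanCLM_pos {A : Matrix n n 𝕜} (hA : (A + Aᴴ).PosDef)
    {x : EuclideanSpace 𝕜 n} (hx : x ≠ 0) :
    0 < RCLike.re ⟪x, toEuclideanCLM (n := n) (𝕜 := 𝕜) A x⟫_𝕜 := by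
  set v := WithLp.ofLp x
  have hv : v ≠ 0 := by simpa [v] using hx
  have hconj : star v ⬝ᵥ (Aᴴ *ᵥ v) = star (star v ⬝ᵥ (A *ᵥ v)) := by
    rw [star_dotProduct, star_mulVec, conjTranspose_conjTranspose, ← dotProduct_mulVec]
  have hpos := hA.re_dotProduct_pos hv
  rw [add_mulVec, dotProduct_add, map_add, hconj, RCLike.star_def, RCLike.conj_re] at hpos
  rw [EuclideanSpace.inner_eq_star_dotProduct, ofLp_toEuclideanCLM, dotProduct_comm]
  linarith

theorem l2_opNorm_mul_inv_lt_one {B C : Matrix n n 𝕜}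
    (h : ∀ x : EuclideanSpace 𝕜 n, x ≠ 0 →
      ‖toEuclideanCLM (n := n) (𝕜 := 𝕜) C x‖ < ‖toEuclideanCLM (n := n) (𝕜 := 𝕜) B x‖) :
    ‖C * B⁻¹‖ < 1 := by
  have hB : IsUnit B.det := by
    refine isUnit_iff_ne_zero.mpr fun hdet => ?_
    obtain ⟨v, hv, hBv⟩ := exists_mulVec_eq_zero_iff.mpr hdet
    have := h (WithLp.toLp 2 v) (by simpa using hv)
    simp [hBv] at this
    exact (norm_nonneg _).not_gt this
  rw [cstar_norm_def]
  refine ContinuousLinearMap.opNorm_lt_one_of_norm_apply_lt _ fun x hx => ?_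
  set y := toEuclideanCLM (n := n) (𝕜 := 𝕜) B⁻¹ x
  have hBy : toEuclideanCLM (n := n) (𝕜 := 𝕜) B y = x := by
    rw [← mul_apply_eq_comp, ← map_mul, mul_nonsing_inv B hB, map_one, one_apply_eq_self]
  have hy : y ≠ 0 := by
    rintro hy
    rw [hy, map_zero] at hBy
    exact hx hBy.symm
  rw [map_mul, mul_apply_eq_comp]
  have := h y hy
  rwa [hBy] at this

end Matrix

theorem kellogg_pd {n : ℕ} (A : Matrix (Fin n) (Fin n) ℂ)
    (hA : (A + Aᴴ).PosDef) :
    ∀ α : ℝ, 0 < α →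
      ‖((α : ℂ) • (1 : Matrix (Fin n) (Fin n) ℂ) + A)⁻¹ *
        ((α : ℂ) • (1 : Matrix (Fin n) (Fin n) ℂ) - A)‖ < 1 := by
  intro α hα
  set T := toEuclideanCLM (n := Fin n) (𝕜 := ℂ) A
  have hcomm : Commute ((α : ℂ) • (1 : Matrix (Fin n) (Fin n) ℂ) + A) ((α : ℂ) • 1 - A) :=
    have hαA : Commute ((α : ℂ) • (1 : Matrix (Fin n) (Fin n) ℂ)) A :=
      (Commute.one_left A).smul_left _
    ((Commute.refl _).add_left hαA.symm).sub_right (hαA.add_left (Commute.refl A))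
  rw [(commute_nonsing_inv_left hcomm).eq]
  refine l2_opNorm_mul_inv_lt_one fun x hx => ?_
  have hpos : 0 < RCLike.re ⟪(α : ℂ) • x, T x⟫_ℂ := by
    rw [inner_smul_left]
    simpa using mul_pos hα (re_inner_toEuclideanCLM_pos hA hx)
  simp only [map_add, map_sub, map_smul, map_one, _root_.add_apply, _root_.sub_apply,
    _root_.smul_apply, one_apply_eq_self]
  exact norm_sub_lt_norm_add_of_re_inner_pos hpos
end

section
/- Let 𝒜 be the block 3×3 matrix [[A, Bᵀ, 0], [−B, 0, −Cᵀ], [0, C, 0]] with A ∈ ℝ^{n×n} symmetric positive definite, B ∈ ℝ^{m×n} of full row rank, and C ∈ ℝ^{l×m}. If 𝒜 is singular, then C is rank-deficient, i.e., rank(C) < l, i.e., null(Cᵀ) is nontrivial. -/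
open Matrix

/-- The block 3x3 saddle point matrix [[A, Bᵀ, 0], [-B, 0, -Cᵀ], [0, C, 0]]. -/
noncomputable def saddle {n m l : ℕ} (A : Matrix (Fin n) (Fin n) ℝ)
    (B : Matrix (Fin m) (Fin n) ℝ) (C : Matrix (Fin l) (Fin m) ℝ) :
    Matrix (Fin n ⊕ (Fin m ⊕ Fin l)) (Fin n ⊕ (Fin m ⊕ Fin l)) ℝ :=
  Matrix.fromBlocks A (Matrix.fromCols Bᵀ 0) (Matrix.fromRows (-B) 0)
    (Matrix.fromBlocks 0 (-Cᵀ) C 0)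

/-
If `(u, p, y)` lies in the kernel, then `A u + Bᵀ p = 0`, `B u + Cᵀ y = 0` and `C p = 0`, so
`uᵀ A u = -(B u)ᵀ p = (Cᵀ y)ᵀ p = yᵀ (C p) = 0` and positive definiteness gives `u = 0`.
The remaining equations become `Bᵀ p = 0` and `Cᵀ y = 0`; full row rank of `B` forces `p = 0`,
so singularity yields some `y ≠ 0` with `Cᵀ y = 0`, i.e. `rank C < l`.
-/

open Function

namespace Matrix

theorem mulVec_transpose_injective_of_rank_eq_card_height {K m n : Type*} [Field K] [Fintype m]
    [Fintype n] {M : Matrix m n K} (h : M.rank = Fintype.card m) : Injective Mᵀ.mulVec := by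
  rw [mulVec_injective_iff, col_transpose, linearIndependent_iff_card_eq_finrank_span,
    Set.finrank, ← rank_eq_finrank_span_row, h]

theorem dotProduct_mulVec_eq_zero_of_saddle_kernel {R ι κ μ : Type*} [CommRing R] [Fintype ι]
    [Fintype κ] [Fintype μ] {A : Matrix ι ι R} {B : Matrix κ ι R} {C : Matrix μ κ R}
    {u : ι → R} {p : κ → R} {y : μ → R} (h₁ : A *ᵥ u + Bᵀ *ᵥ p = 0)
    (h₂ : B *ᵥ u + Cᵀ *ᵥ y = 0) (h₃ : C *ᵥ p = 0) : u ⬝ᵥ A *ᵥ u = 0 :=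
  calc u ⬝ᵥ A *ᵥ u = -(B *ᵥ u ⬝ᵥ p) := by
        rw [eq_neg_of_add_eq_zero_left h₁, dotProduct_neg, dotProduct_mulVec, vecMul_transpose]
    _ = C *ᵥ p ⬝ᵥ y := by
        rw [eq_neg_of_add_eq_zero_left h₂, neg_dotProduct, neg_neg, dotProduct_comm,
          dotProduct_mulVec, vecMul_transpose]
    _ = 0 := by rw [h₃, zero_dotProduct]

end Matrix

section Saddle

variable {n m l : ℕ} {A : Matrix (Fin n) (Fin n) ℝ} {B : Matrix (Fin m) (Fin n) ℝ}
  {C : Matrix (Fin l) (Fin m) ℝ}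

theorem saddle_mulVec (u : Fin n → ℝ) (p : Fin m → ℝ) (y : Fin l → ℝ) :
    saddle A B C *ᵥ (u ⊕ᵥ (p ⊕ᵥ y)) =
      (A *ᵥ u + Bᵀ *ᵥ p) ⊕ᵥ (-(B *ᵥ u + Cᵀ *ᵥ y) ⊕ᵥ C *ᵥ p) := by
  simp [saddle, fromBlocks_mulVec, fromRows_mulVec, ← Sum.elim_add_add, add_comm, neg_mulVec]

theorem saddle_mulVec_injective (hA : A.PosDef) (hB : Injective Bᵀ.mulVec)
    (hC : Injective Cᵀ.mulVec) : Injective (saddle A B C).mulVec := by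
  refine (injective_iff_map_eq_zero (saddle A B C).mulVecLin).mpr fun v hv ↦ ?_
  obtain ⟨u, w, rfl⟩ : ∃ u w, v = u ⊕ᵥ w := ⟨_, _, (Sum.elim_comp_inl_inr v).symm⟩
  obtain ⟨p, y, rfl⟩ : ∃ p y, w = p ⊕ᵥ y := ⟨_, _, (Sum.elim_comp_inl_inr w).symm⟩
  rw [mulVecLin_apply, saddle_mulVec, ← Sum.elim_zero_zero, ← Sum.elim_zero_zero] at hv
  simp only [Sum.elim_eq_iff, neg_eq_zero] at hv
  obtain ⟨h₁, h₂, h₃⟩ := hv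
  have hu : u = 0 := by
    by_contra hu
    exact (hA.dotProduct_mulVec_pos hu).ne'
      (by simpa using dotProduct_mulVec_eq_zero_of_saddle_kernel h₁ h₂ h₃)
  subst hu
  rw [mulVec_zero, zero_add] at h₁ h₂
  rw [hB (h₁.trans (mulVec_zero _).symm), hC (h₂.trans (mulVec_zero _).symm)]
  simp only [Sum.elim_zero_zero]

end Saddle

theorem singular_implies_C_rank_deficient {n m l : ℕ}
    (A : Matrix (Fin n) (Fin n) ℝ) (B : Matrix (Fin m) (Fin n) ℝ)
    (C : Matrix (Fin l) (Fin m) ℝ)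
    (hA : A.PosDef) (hB : B.rank = m)
    (hsing : ¬ IsUnit (saddle A B C)) :
    C.rank < l := by
  by_contra hC
  have hCl : C.rank = l := le_antisymm C.rank_le_height (not_lt.mp hC)
  refine hsing (mulVec_injective_iff_isUnit.mp (saddle_mulVec_injective hA ?_ ?_))
  · exact mulVec_transpose_injective_of_rank_eq_card_height (by rw [hB, Fintype.card_fin])
  · exact mulVec_transpose_injective_of_rank_eq_card_height (by rw [hCl, Fintype.card_fin])
end

section
/- Let 𝒜₁ = [[A, Bᵀ, 0], [−B, 0, 0], [0, 0, 0]] with A SPD and B of full row rank, and let α > 0. If x is an eigenvector of 𝒱_α = (αI + 𝒜₁)⁻¹(αI − 𝒜₁) with eigenvalue λ and x ∉ null(𝒜₁), then |λ| < 1. -/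
open Matrix

/-! The Hermitian part of `𝒜₁` is `diag(A, 0, 0)`, so `Re ⟨x, 𝒜₁ x⟩ = Re ⟨x₁, A x₁⟩ ≥ 0`, with
equality only for `x₁ = 0`. Pairing `(α - 𝒜₁) x = λ (α + 𝒜₁) x` with `x` gives
`αs - q = λ (αs + q)` for `s = ⟨x, x⟩ > 0` and `q = ⟨x, 𝒜₁ x⟩`; when `Re q > 0`, we have
`|αs - q| < |αs + q|`, so `|λ| < 1`. When `x₁ = 0` the block structure makes `q = 0`, hence
`λ = 1` and `𝒜₁ x = 0`. -/

/-- The block 3x3 matrix [[A, Bᵀ, 0], [-B, 0, 0], [0, 0, 0]], mapped to ℂ. -/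
noncomputable def saddleA1C {n m l : ℕ} (A : Matrix (Fin n) (Fin n) ℝ)
    (B : Matrix (Fin m) (Fin n) ℝ) :
    Matrix (Fin n ⊕ (Fin m ⊕ Fin l)) (Fin n ⊕ (Fin m ⊕ Fin l)) ℂ :=
  (Matrix.fromBlocks A (Matrix.fromCols Bᵀ 0) (Matrix.fromRows (-B) 0)
    0).map Complex.ofReal

open ComplexOrder in
lemma re_star_dotProduct_self_pos {ι : Type*} [Fintype ι] {v : ι → ℂ} (hv : v ≠ 0) :
    0 < (star v ⬝ᵥ v).re :=
  (Complex.pos_iff.mp (dotProduct_star_self_pos_iff.mpr hv)).1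

open ComplexOrder in
lemma Complex.norm_sub_lt_norm_add_of_pos {a z : ℂ} (ha : 0 < a) (hz : 0 < z.re) :
    ‖a - z‖ < ‖a + z‖ := by
  obtain ⟨ha_re, ha_im⟩ := Complex.pos_iff.mp ha
  rw [← sq_lt_sq₀ (norm_nonneg _) (norm_nonneg _), Complex.sq_norm, Complex.sq_norm,
    Complex.normSq_apply, Complex.normSq_apply]
  simp only [sub_re, sub_im, add_re, add_im, ← ha_im]
  nlinarith

section Cayley

variable {ι : Type*} [Fintype ι] [DecidableEq ι] {M : Matrix ι ι ℂ} {α : ℝ}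

lemma isUnit_smul_one_add_of_re_nonneg (hα : 0 < α)
    (hM : ∀ v, 0 ≤ (star v ⬝ᵥ M *ᵥ v).re) : IsUnit ((α : ℂ) • 1 + M) := by
  rw [← mulVec_injective_iff_isUnit, ← coe_mulVecLin, injective_iff_map_eq_zero]
  intro v hv
  rw [mulVecLin_apply] at hv
  by_contra hne
  have hre : (star v ⬝ᵥ ((α : ℂ) • 1 + M) *ᵥ v).re =
      α * (star v ⬝ᵥ v).re + (star v ⬝ᵥ M *ᵥ v).re := by
    simp [add_mulVec, smul_mulVec]
  rw [hv, dotProduct_zero, Complex.zero_re] at hre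
  nlinarith [hM v, re_star_dotProduct_self_pos hne]

lemma mulVec_eq_smul_mulVec_of_inv_mul_mulVec {P Q : Matrix ι ι ℂ} (hP : IsUnit P)
    {x : ι → ℂ} {lam : ℂ} (h : (P⁻¹ * Q) *ᵥ x = lam • x) : Q *ᵥ x = lam • P *ᵥ x := by
  rw [← mulVec_smul, ← h, mulVec_mulVec, ← mul_assoc,
    mul_nonsing_inv _ ((isUnit_iff_isUnit_det _).mp hP), one_mul]

variable {x : ι → ℂ} {lam : ℂ}

lemma star_dotProduct_eq_of_mulVec_eq_smul_mulVec
    (h : ((α : ℂ) • 1 - M) *ᵥ x = lam • ((α : ℂ) • 1 + M) *ᵥ x) :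
    α * (star x ⬝ᵥ x) - star x ⬝ᵥ M *ᵥ x =
      lam * (α * (star x ⬝ᵥ x) + star x ⬝ᵥ M *ᵥ x) := by
  simpa [sub_mulVec, add_mulVec, smul_mulVec, dotProduct_sub, dotProduct_add,
    dotProduct_smul, mul_add] using congrArg (star x ⬝ᵥ ·) h

open ComplexOrder in
lemma norm_lt_one_of_mulVec_eq_smul_mulVec (hα : 0 < α) (hx : x ≠ 0)
    (h : ((α : ℂ) • 1 - M) *ᵥ x = lam • ((α : ℂ) • 1 + M) *ᵥ x)
    (hq : 0 < (star x ⬝ᵥ M *ᵥ x).re) : ‖lam‖ < 1 := by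
  have hs : (0 : ℂ) < α * (star x ⬝ᵥ x) :=
    mul_pos (Complex.zero_lt_real.mpr hα) (dotProduct_star_self_pos_iff.mpr hx)
  have hlt := Complex.norm_sub_lt_norm_add_of_pos hs hq
  rw [star_dotProduct_eq_of_mulVec_eq_smul_mulVec h, norm_mul] at hlt
  exact (mul_lt_iff_lt_one_left
    ((mul_nonneg (norm_nonneg _) (norm_nonneg _)).trans_lt hlt)).mp hlt

open ComplexOrder in
lemma mulVec_eq_zero_of_mulVec_eq_smul_mulVec (hα : 0 < α) (hx : x ≠ 0)
    (h : ((α : ℂ) • 1 - M) *ᵥ x = lam • ((α : ℂ) • 1 + M) *ᵥ x)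
    (hq : star x ⬝ᵥ M *ᵥ x = 0) : M *ᵥ x = 0 := by
  have hlam : lam = 1 := by
    have hdot := star_dotProduct_eq_of_mulVec_eq_smul_mulVec h
    rw [hq, sub_zero, add_zero] at hdot
    have hs : (α : ℂ) * (star x ⬝ᵥ x) ≠ 0 :=
      mul_ne_zero (Complex.ofReal_ne_zero.mpr hα.ne') (dotProduct_star_self_eq_zero.not.mpr hx)
    exact (mul_eq_right₀ hs).mp hdot.symm
  rw [hlam, one_smul, sub_mulVec, add_mulVec] at h
  linear_combination (norm := module) (-(1 / 2 : ℂ)) • h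

end Cayley

lemma re_star_dotProduct_map_ofReal_mulVec {ι κ : Type*} [Fintype ι] [Fintype κ]
    (C : Matrix ι κ ℝ) (u : ι → ℂ) (w : κ → ℂ) :
    (star u ⬝ᵥ C.map Complex.ofReal *ᵥ w).re =
      (fun i => (u i).re) ⬝ᵥ C *ᵥ (fun j => (w j).re) +
        (fun i => (u i).im) ⬝ᵥ C *ᵥ (fun j => (w j).im) := by
  simp only [dotProduct, mulVec, Finset.mul_sum, Complex.re_sum, ← Finset.sum_add_distrib]
  refine Finset.sum_congr rfl fun i _ => Finset.sum_congr rfl fun j _ => ?_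
  simp [Complex.mul_re, Complex.mul_im]

lemma re_star_dotProduct_map_ofReal_transpose_mulVec {ι κ : Type*} [Fintype ι] [Fintype κ]
    (C : Matrix ι κ ℝ) (u : κ → ℂ) (w : ι → ℂ) :
    (star u ⬝ᵥ Cᵀ.map Complex.ofReal *ᵥ w).re =
      (star w ⬝ᵥ C.map Complex.ofReal *ᵥ u).re := by
  simp only [re_star_dotProduct_map_ofReal_mulVec, dotProduct_mulVec _ Cᵀ, vecMul_transpose,
    dotProduct_comm (C *ᵥ _)]

lemma Matrix.PosSemidef.re_star_dotProduct_map_ofReal_mulVec_nonneg {ι : Type*} [Fintype ι]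
    {A : Matrix ι ι ℝ} (hA : A.PosSemidef) (v : ι → ℂ) :
    0 ≤ (star v ⬝ᵥ A.map Complex.ofReal *ᵥ v).re := by
  rw [re_star_dotProduct_map_ofReal_mulVec]
  have hre := hA.dotProduct_mulVec_nonneg (fun i => (v i).re)
  have him := hA.dotProduct_mulVec_nonneg (fun i => (v i).im)
  simp only [star_trivial] at hre him
  positivity

lemma Matrix.PosDef.re_star_dotProduct_map_ofReal_mulVec_pos {ι : Type*} [Fintype ι]
    {A : Matrix ι ι ℝ} (hA : A.PosDef) {v : ι → ℂ} (hv : v ≠ 0) :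
    0 < (star v ⬝ᵥ A.map Complex.ofReal *ᵥ v).re := by
  rw [re_star_dotProduct_map_ofReal_mulVec]
  have hre := hA.posSemidef.dotProduct_mulVec_nonneg (fun i => (v i).re)
  have him := hA.posSemidef.dotProduct_mulVec_nonneg (fun i => (v i).im)
  simp only [star_trivial] at hre him
  by_cases h : (fun i => (v i).re) = 0
  · have him_ne : (fun i => (v i).im) ≠ 0 := fun h' =>
      hv (funext fun i => Complex.ext (congrFun h i) (congrFun h' i))
    have := hA.dotProduct_mulVec_pos him_ne
    simp only [star_trivial] at this
    linarith
  · have := hA.dotProduct_mulVec_pos h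
    simp only [star_trivial] at this
    linarith

section Saddle

variable {n m l : ℕ} (A : Matrix (Fin n) (Fin n) ℝ) (B : Matrix (Fin m) (Fin n) ℝ)
  (x : Fin n ⊕ (Fin m ⊕ Fin l) → ℂ)

lemma saddleA1C_mulVec :
    saddleA1C A B *ᵥ x =
      Sum.elim (A.map Complex.ofReal *ᵥ (x ∘ Sum.inl) +
          Bᵀ.map Complex.ofReal *ᵥ (x ∘ Sum.inr ∘ Sum.inl))
        (Sum.elim (-(B.map Complex.ofReal *ᵥ (x ∘ Sum.inl))) 0) := by
  ext (i | i | i) <;>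
    simp [saddleA1C, mulVec, dotProduct, Fintype.sum_sum_type, fromBlocks]

lemma star_dotProduct_saddleA1C_mulVec :
    star x ⬝ᵥ saddleA1C A B *ᵥ x =
      star (x ∘ Sum.inl) ⬝ᵥ A.map Complex.ofReal *ᵥ (x ∘ Sum.inl) +
        (star (x ∘ Sum.inl) ⬝ᵥ Bᵀ.map Complex.ofReal *ᵥ (x ∘ Sum.inr ∘ Sum.inl) -
          star (x ∘ Sum.inr ∘ Sum.inl) ⬝ᵥ B.map Complex.ofReal *ᵥ (x ∘ Sum.inl)) := by
  have hx : star x = Sum.elim (star (x ∘ Sum.inl))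
      (Sum.elim (star (x ∘ Sum.inr ∘ Sum.inl)) (star (x ∘ Sum.inr ∘ Sum.inr))) := by
    ext (i | i | i) <;> rfl
  rw [saddleA1C_mulVec, hx, sumElim_dotProduct_sumElim, sumElim_dotProduct_sumElim,
    dotProduct_add, dotProduct_neg, dotProduct_zero, add_zero, ← sub_eq_add_neg,
    add_sub_assoc]

lemma re_star_dotProduct_saddleA1C_mulVec :
    (star x ⬝ᵥ saddleA1C A B *ᵥ x).re =
      (star (x ∘ Sum.inl) ⬝ᵥ A.map Complex.ofReal *ᵥ (x ∘ Sum.inl)).re := by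
  rw [star_dotProduct_saddleA1C_mulVec, Complex.add_re, Complex.sub_re,
    re_star_dotProduct_map_ofReal_transpose_mulVec, sub_self, add_zero]

lemma star_dotProduct_saddleA1C_mulVec_eq_zero (hx : x ∘ Sum.inl = 0) :
    star x ⬝ᵥ saddleA1C A B *ᵥ x = 0 := by
  simp [star_dotProduct_saddleA1C_mulVec, hx]

end Saddle

theorem eigenvalue_V_strict_general {n m l : ℕ}
    (A : Matrix (Fin n) (Fin n) ℝ) (B : Matrix (Fin m) (Fin n) ℝ)
    (hA : A.PosDef)
    (α : ℝ) (hα : 0 < α) (lam : ℂ) (x : Fin n ⊕ (Fin m ⊕ Fin l) → ℂ)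
    (hx : x ≠ 0)
    (heig : (((α : ℂ) • (1 : Matrix (Fin n ⊕ (Fin m ⊕ Fin l)) (Fin n ⊕ (Fin m ⊕ Fin l)) ℂ) +
        saddleA1C (l := l) A B)⁻¹ * ((α : ℂ) • 1 - saddleA1C (l := l) A B)).mulVec x = lam • x)
    (hker : (saddleA1C (l := l) A B).mulVec x ≠ 0) :
    ‖lam‖ < 1 := by
  have hP : IsUnit ((α : ℂ) • 1 + saddleA1C (l := l) A B) :=
    isUnit_smul_one_add_of_re_nonneg hα fun v => by
      rw [re_star_dotProduct_saddleA1C_mulVec]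
      exact hA.posSemidef.re_star_dotProduct_map_ofReal_mulVec_nonneg _
  have h := mulVec_eq_smul_mulVec_of_inv_mul_mulVec hP heig
  by_cases hx₁ : x ∘ Sum.inl = 0
  · exact absurd (mulVec_eq_zero_of_mulVec_eq_smul_mulVec hα hx h
      (star_dotProduct_saddleA1C_mulVec_eq_zero A B x hx₁)) hker
  · refine norm_lt_one_of_mulVec_eq_smul_mulVec hα hx h ?_
    rw [re_star_dotProduct_saddleA1C_mulVec]
    exact hA.re_star_dotProduct_map_ofReal_mulVec_pos hx₁

theorem eigenvalue_V_strict {n m l : ℕ}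
    (A : Matrix (Fin n) (Fin n) ℝ) (B : Matrix (Fin m) (Fin n) ℝ)
    (hA : A.PosDef) (hB : B.rank = m)
    (α : ℝ) (hα : 0 < α) (lam : ℂ) (x : Fin n ⊕ (Fin m ⊕ Fin l) → ℂ)
    (hx : x ≠ 0)
    (heig : (((α : ℂ) • (1 : Matrix (Fin n ⊕ (Fin m ⊕ Fin l)) (Fin n ⊕ (Fin m ⊕ Fin l)) ℂ) +
        saddleA1C (l := l) A B)⁻¹ * ((α : ℂ) • 1 - saddleA1C (l := l) A B)).mulVec x = lam • x)
    (hker : (saddleA1C (l := l) A B).mulVec x ≠ 0) :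
    ‖lam‖ < 1 :=
  eigenvalue_V_strict_general A B hA α hα lam x hx heig hker
end
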